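/- Let n ≥ 1, let D ⊆ ℝ^{2n} be open, and let J : D → (ℝ^{2n} →L[ℝ] ℝ^{2n}) be a C¹ map with J(x) ∘ J(x) = −id for every x ∈ D. Define, for (x,q) ∈ D × ℝ^{2n}, the linear endomorphism 𝕁_{(x,q)} of ℝ^{2n} × ℝ^{2n} by 𝕁_{(x,q)}(ξ, η) := ( J(x)ξ , J(x)η + ((fderiv J x)(q))(ξ) ), where (fderiv J x)(q) ∈ ℝ^{2n} →L[ℝ] ℝ^{2n} is the derivative of J at x in the direction q. Then 𝕁_{(x,q)} ∘ 𝕁_{(x,q)} = −id for every (x,q) ∈ D × ℝ^{2n}, and the projection (x,q) ↦ x intertwines 𝕁 and J, i.e. the first component of 𝕁_{(x,q)}(ξ,η) is J(x)ξ. (The canonical lift 𝕁 of J to the tangent bundle is an almost complex structure and the bundle projection is (𝕁, J)-holomorphic.) -/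

import Mathlib

/-- The canonical lift of an almost complex structure `J` to the tangent bundle
`D × ℝ²ⁿ`, at the point `(x, q)`, applied to a tangent vector `(ξ, η)`:
`𝕁_{(x,q)}(ξ, η) = (J(x)ξ, J(x)η + (DJ(x)(q))(ξ))`. -/
noncomputable def tanLift {E : Type*} [NormedAddCommGroup E] [NormedSpace ℝ E]
    (J : E → (E →L[ℝ] E)) (x q : E) (ξ η : E) : E × E :=
  (J x ξ, J x η + (fderiv ℝ J x q) ξ)

/-- The canonical lift `𝕁` of `J` to the tangent bundle squares to `−id`, and the
bundle projection intertwines `𝕁` and `J` (the first component of `𝕁(ξ,η)` is `J(x)ξ`). -/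
theorem stmt_9 {n : ℕ} (hn : 1 ≤ n)
    (D : Set (EuclideanSpace ℝ (Fin (2 * n)))) (hD : IsOpen D)
    (J : EuclideanSpace ℝ (Fin (2 * n)) →
      (EuclideanSpace ℝ (Fin (2 * n)) →L[ℝ] EuclideanSpace ℝ (Fin (2 * n))))
    (hJ : ContDiffOn ℝ 1 J D)
    (hJsq : ∀ x ∈ D, (J x).comp (J x) =
      - ContinuousLinearMap.id ℝ (EuclideanSpace ℝ (Fin (2 * n)))) :
    (∀ x ∈ D, ∀ q ξ η : EuclideanSpace ℝ (Fin (2 * n)),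
      tanLift J x q (tanLift J x q ξ η).1 (tanLift J x q ξ η).2 = (-ξ, -η)) ∧
    (∀ x ∈ D, ∀ q ξ η : EuclideanSpace ℝ (Fin (2 * n)),
      (tanLift J x q ξ η).1 = J x ξ) := by
  refine ⟨?_, fun x _ q ξ η => rfl⟩
  intro x hx q ξ η
  have hxn : D ∈ nhds x := hD.mem_nhds hx
  have hdJ : HasFDerivAt J (fderiv ℝ J x) x :=
    (((hJ.contDiffAt hxn).differentiableAt one_ne_zero)).hasFDerivAt
  set J' := fderiv ℝ J x with hJ'
  have hJJ : ∀ v : EuclideanSpace ℝ (Fin (2 * n)), J x (J x v) = -v := by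
    intro v
    have := congrArg (fun T => T v) (hJsq x hx)
    simpa using this
  have hzero : ∀ v : EuclideanSpace ℝ (Fin (2 * n)), J x (J' q v) + J' q (J x v) = 0 := by
    intro v
    have hu : HasFDerivAt (fun y => J y v) (J'.flip v) x := by
      have := hdJ.clm_apply (hasFDerivAt_const v x)
      simpa using this
    have hg : HasFDerivAt (fun y => J y (J y v))
        ((J x).comp (J'.flip v) + J'.flip (J x v)) x := hdJ.clm_apply hu
    have heq : (fun y => J y (J y v)) =ᶠ[nhds x] fun _ => -v := by
      filter_upwards [hxn] with y hy
      have := congrArg (fun T => T v) (hJsq y hy)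
      simpa using this
    have h0 : (J x).comp (J'.flip v) + J'.flip (J x v) = 0 :=
      (hg.congr_of_eventuallyEq heq.symm).unique (hasFDerivAt_const _ _)
    have := congrArg (fun T : EuclideanSpace ℝ (Fin (2 * n)) →L[ℝ] EuclideanSpace ℝ (Fin (2 * n)) => T q) h0
    simpa using this
  simp only [tanLift, Prod.mk.injEq]
  constructor
  · exact hJJ ξ
  · have h1 : J x (J x η + J' q ξ) = J x (J x η) + J x (J' q ξ) := by
      simp [map_add]
    rw [h1, hJJ η]
    have := hzero ξ
    rw [add_assoc, this, add_zero]
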